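/- arXiv:2509.06211 — 6 statements merged into one kernel-verified Lean document; each statement's English description precedes it below -/
import Mathlib

section
/- Let k be a field of characteristic p > 2 and let f = x_1^d + ... + x_n^d in k[x_1,...,x_n] with d ≥ p. Then f^{p-2} lies in the ideal (x_1^p, ..., x_n^p). -/
open MvPolynomial

theorem fermat_high_degree_not_qfpure (k : Type*) [Field k] (p : ℕ) [CharP k p]
    (hp : 2 < p) (n d : ℕ) (hd : p ≤ d) :
    (∑ i : Fin n, (X i : MvPolynomial (Fin n) k) ^ d) ^ (p - 2) ∈
      Ideal.span (Set.range fun i : Fin n => (X i : MvPolynomial (Fin n) k) ^ p) := by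
  apply Ideal.pow_mem_of_mem
  · apply Ideal.sum_mem
    intro i _
    have : (X i : MvPolynomial (Fin n) k) ^ d = X i ^ p * X i ^ (d - p) := by
      rw [← pow_add]; congr 1; omega
    rw [this]
    exact Ideal.mul_mem_right _ _ (Ideal.subset_span ⟨i, rfl⟩)
  · omega
end

section
/- Let k be a field of characteristic p > 2, let a ≥ 1, and suppose d·a ≤ p - 1 (i.e., d < ⌈p/a⌉) and a·n ≥ p - 1. Then for f = x_1^d + ... + x_n^d in k[x_1,...,x_n], the polynomial f^{p-1} does not lie in the ideal (x_1^p, ..., x_n^p). In particular k[x_1,...,x_n]/(f) is F-pure by Fedder's criterion. -/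
open MvPolynomial Finset

lemma tele_sum (a M n : ℕ) (h : M ≤ a * n) :
    ∑ i ∈ Finset.range n, min a (M - a * i) = M := by
  have key : ∀ i, min a (M - a * i) = min (a * (i + 1)) M - min (a * i) M := by
    intro i
    have : a * (i + 1) = a * i + a := by ring
    omega
  have hmono : Monotone (fun i : ℕ => min (a * i) M) := by
    intro x y hxy
    have : a * x ≤ a * y := Nat.mul_le_mul_left a hxy
    simp only
    omega
  calc ∑ i ∈ Finset.range n, min a (M - a * i)
      = ∑ i ∈ Finset.range n, (min (a * (i + 1)) M - min (a * i) M) :=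
        Finset.sum_congr rfl fun i _ => key i
    _ = min (a * n) M - min (a * 0) M := Finset.sum_range_tsub hmono n
    _ = M := by omega

lemma prod_pow_eq_monomial {k : Type*} [Field k] (n : ℕ) (e : Fin n → ℕ) :
    (∏ i : Fin n, (X i : MvPolynomial (Fin n) k) ^ e i)
      = monomial (Finsupp.equivFunOnFinite.symm e) (1 : k) := by
  set s : Fin n →₀ ℕ := Finsupp.equivFunOnFinite.symm e with hs
  have hse : ∀ i, s i = e i := fun i => rfl
  rw [← MvPolynomial.prod_X_pow_eq_monomial (s := s)]
  refine (Finset.prod_subset (Finset.subset_univ _) ?_).symm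
  intro i _ hi
  rw [Finsupp.notMem_support_iff] at hi
  rw [← hse i, hi, pow_zero]

theorem fermat_low_degree_fpure (k : Type*) [Field k] (p : ℕ) [CharP k p]
    (hp : 2 < p) (n d a : ℕ) (ha : 1 ≤ a) (hd : 0 < d)
    (hda : d * a ≤ p - 1) (han : p - 1 ≤ a * n) :
    (∑ i : Fin n, (X i : MvPolynomial (Fin n) k) ^ d) ^ (p - 1) ∉
      Ideal.span (Set.range fun i : Fin n => (X i : MvPolynomial (Fin n) k) ^ p) := by
  have hprime : p.Prime := CharP.char_is_prime_of_two_le k p (by omega)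
  set M := p - 1 with hM
  set c : Fin n → ℕ := fun i => min a (M - a * i.1) with hc
  have hsum : ∑ i : Fin n, c i = M := by
    rw [Fin.sum_univ_eq_sum_range (fun i => min a (M - a * i)) n]
    exact tele_sum a M n han
  have hca : ∀ i, c i ≤ a := fun i => min_le_left _ _
  set m : Fin n →₀ ℕ := Finsupp.equivFunOnFinite.symm (fun i => d * c i) with hm
  have hmi : ∀ i, m i = d * c i := fun i => rfl
  have hmlt : ∀ i, m i < p := by
    intro i
    have h1 : d * c i ≤ d * a := Nat.mul_le_mul_left d (hca i)
    have := hmi i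
    omega
  -- coefficient computation
  have hcoeff : MvPolynomial.coeff m
      ((∑ i : Fin n, (X i : MvPolynomial (Fin n) k) ^ d) ^ M)
      = (Nat.multinomial Finset.univ c : k) := by
    rw [Finset.sum_pow_eq_sum_piAntidiag, MvPolynomial.coeff_sum]
    have hterm : ∀ g : Fin n → ℕ,
        MvPolynomial.coeff m ((Nat.multinomial Finset.univ g : MvPolynomial (Fin n) k) *
          ∏ i, ((X i : MvPolynomial (Fin n) k) ^ d) ^ g i)
        = if g = c then (Nat.multinomial Finset.univ g : k) else 0 := by
      intro g
      have : ∀ i, ((X i : MvPolynomial (Fin n) k) ^ d) ^ g i = X i ^ (d * g i) := by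
        intro i; rw [← pow_mul]
      simp_rw [this]
      rw [prod_pow_eq_monomial, ← map_natCast (C : k →+* MvPolynomial (Fin n) k),
        MvPolynomial.coeff_C_mul, MvPolynomial.coeff_monomial]
      have hiff : (Finsupp.equivFunOnFinite.symm fun i => d * g i) = m ↔ g = c := by
        rw [hm, Equiv.apply_eq_iff_eq, funext_iff, funext_iff]
        constructor
        · intro h i; exact Nat.eq_of_mul_eq_mul_left hd (h i)
        · intro h i; rw [h i]
      by_cases hg : g = c
      · rw [if_pos (hiff.mpr hg), if_pos hg, mul_one]
      · rw [if_neg (fun h => hg (hiff.mp h)), if_neg hg, mul_zero]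
    rw [Finset.sum_congr rfl fun g _ => hterm g, Finset.sum_ite_eq' _ c
      (fun g => (Nat.multinomial Finset.univ g : k)),
      if_pos (Finset.mem_piAntidiag.mpr ⟨hsum, fun i _ => Finset.mem_univ i⟩)]
  have hmult_ne : (Nat.multinomial Finset.univ c : k) ≠ 0 := by
    rw [Ne, CharP.cast_eq_zero_iff k p]
    intro hdvd
    have hdvdfact : Nat.multinomial Finset.univ c ∣ Nat.factorial M := by
      rw [← hsum]
      exact Dvd.intro_left _ (Nat.multinomial_spec _ _)
    have : p ∣ Nat.factorial M := hdvd.trans hdvdfact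
    rw [Nat.Prime.dvd_factorial hprime] at this
    omega
  intro hmem
  have hrange : (Set.range fun i : Fin n => (X i : MvPolynomial (Fin n) k) ^ p)
      = (fun s => monomial s (1 : k)) '' (Set.range fun i : Fin n => Finsupp.single i p) := by
    rw [← Set.range_comp]
    refine congrArg Set.range (funext fun i => ?_)
    exact MvPolynomial.X_pow_eq_monomial
  rw [hrange, MvPolynomial.mem_ideal_span_monomial_image] at hmem
  have hms : m ∈ ((∑ i : Fin n, (X i : MvPolynomial (Fin n) k) ^ d) ^ M).support := by
    rw [MvPolynomial.mem_support_iff, hcoeff]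
    exact hmult_ne
  obtain ⟨si, ⟨i, rfl⟩, hle⟩ := hmem m hms
  have : p ≤ m i := Finsupp.single_le_iff.mp hle
  exact absurd this (not_le.mpr (hmlt i))
end

section
/- Let k be a field of characteristic p > 2, let a ≥ 1, and suppose d·(a+1) ≥ p and a·n < p - 1. Then for f = x_1^d + ... + x_n^d in k[x_1,...,x_n], the polynomial f^{p-1} lies in the ideal (x_1^p, ..., x_n^p). -/
open MvPolynomial

theorem fermat_high_degree_not_fpure (k : Type*) [Field k] (p : ℕ) [CharP k p]
    (hp : 2 < p) (n d a : ℕ) (ha : 1 ≤ a) (hd : 0 < d)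
    (hda : p ≤ d * (a + 1)) (han : a * n < p - 1) :
    (∑ i : Fin n, (X i : MvPolynomial (Fin n) k) ^ d) ^ (p - 1) ∈
      Ideal.span (Set.range fun i : Fin n => (X i : MvPolynomial (Fin n) k) ^ p) := by
  rw [Finset.sum_pow_eq_sum_piAntidiag]
  apply Ideal.sum_mem
  intro c hc
  rw [Finset.mem_piAntidiag] at hc
  obtain ⟨hsum, -⟩ := hc
  have hex : ∃ i : Fin n, a + 1 ≤ c i := by
    by_contra h
    push_neg at h
    have hle : ∑ i : Fin n, c i ≤ ∑ _i : Fin n, a :=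
      Finset.sum_le_sum fun i _ => Nat.lt_succ_iff.mp (h i)
    rw [hsum] at hle
    simp only [Finset.sum_const, Finset.card_univ, Fintype.card_fin, smul_eq_mul, mul_comm n a] at hle
    omega
  obtain ⟨i, hi⟩ := hex
  apply Ideal.mul_mem_left
  rw [← Finset.prod_erase_mul _ _ (Finset.mem_univ i)]
  apply Ideal.mul_mem_left
  have hdi : p ≤ d * c i := le_trans hda (Nat.mul_le_mul_left d hi)
  rw [← pow_mul, ← Nat.sub_add_cancel hdi, pow_add]
  apply Ideal.mul_mem_left
  exact Ideal.subset_span ⟨i, rfl⟩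
end

section
/- Let k be a field of characteristic p > 2, let a ≥ 1, and suppose d·(a+1) ≥ p and a·n < p - 2. Then for f = x_1^d + ... + x_n^d in k[x_1,...,x_n], the polynomial f^{p-2} lies in the ideal (x_1^p, ..., x_n^p). -/
open MvPolynomial

theorem fermat_high_degree_not_quasi_fpure (k : Type*) [Field k] (p : ℕ) [CharP k p]
    (hp : 2 < p) (n d a : ℕ) (ha : 1 ≤ a) (hd : 0 < d)
    (hda : p ≤ d * (a + 1)) (han : a * n < p - 2) :
    (∑ i : Fin n, (X i : MvPolynomial (Fin n) k) ^ d) ^ (p - 2) ∈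
      Ideal.span (Set.range fun i : Fin n => (X i : MvPolynomial (Fin n) k) ^ p) := by
  classical
  rw [Finset.sum_pow_eq_sum_piAntidiag]
  apply Ideal.sum_mem
  intro c hc
  rw [Finset.mem_piAntidiag] at hc
  obtain ⟨hsum, -⟩ := hc
  have hex : ∃ i : Fin n, a + 1 ≤ c i := by
    by_contra h
    push_neg at h
    have hle : Finset.univ.sum c ≤ a * n := by
      calc Finset.univ.sum c ≤ ∑ _i : Fin n, a := Finset.sum_le_sum fun i _ => by
              have := h i; omega
        _ = a * n := by simp [Finset.sum_const, mul_comm]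
    omega
  obtain ⟨i, hi⟩ := hex
  apply Ideal.mul_mem_left
  rw [← Finset.mul_prod_erase _ _ (Finset.mem_univ i)]
  have hpow : p ≤ d * c i :=
    le_trans hda (Nat.mul_le_mul_left d hi)
  rw [← pow_mul, show d * c i = p + (d * c i - p) by omega, pow_add]
  exact Ideal.mul_mem_right _ _
    (Ideal.mul_mem_right _ _ (Ideal.subset_span ⟨i, rfl⟩))
end

section
/- Let k be a field of characteristic p > 0 and f = x_1^d + ... + x_n^d in k[x_1,...,x_n]. Then f^{p-1} ∉ (x_1^p,...,x_n^p) if and only if there exist nonnegative integers i_1, ..., i_n with i_1 + ... + i_n = p - 1 and d·i_j ≤ p - 1 for all j. -/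
/-!
By the multinomial theorem, `f ^ (p - 1)` is the sum over compositions `c` of `p - 1` of
`multinomial c • x ^ (d • c)`; since `d ≠ 0` these monomials are pairwise distinct, and the
coefficients are nonzero in characteristic `p` because they divide `(p - 1)!`. A polynomial lies in
the monomial ideal `(x_1 ^ p, ..., x_n ^ p)` iff every monomial of its support has an exponent `≥ p`.
-/

open MvPolynomial Finset

theorem Nat.cast_multinomial_ne_zero {ι k : Type*} [AddMonoidWithOne k] {p : ℕ} [CharP k p]
    (hp : p.Prime) {s : Finset ι} {f : ι → ℕ} (hf : ∑ i ∈ s, f i < p) :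
    (Nat.multinomial s f : k) ≠ 0 := by
  rw [Ne, CharP.cast_eq_zero_iff k p]
  intro hdvd
  have : p ∣ (∑ i ∈ s, f i).factorial := Nat.multinomial_spec s f ▸ hdvd.mul_left _
  exact absurd (hp.dvd_factorial.mp this) (not_le.mpr hf)

namespace MvPolynomial

variable {σ R : Type*} [CommSemiring R]

theorem mem_ideal_span_range_X_pow_iff {x : MvPolynomial σ R} (p : ℕ) :
    x ∈ Ideal.span (Set.range fun i => (X i : MvPolynomial σ R) ^ p) ↔
      ∀ m ∈ x.support, ∃ i, p ≤ m i := by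
  have : (Set.range fun i => (X i : MvPolynomial σ R) ^ p) =
      (fun s => monomial s (1 : R)) '' Set.range fun i => Finsupp.single i p := by
    simp_rw [X_pow_eq_monomial, ← Set.range_comp]; rfl
  simp [this, mem_ideal_span_monomial_image, Finsupp.single_le_iff]

variable [Fintype σ]

theorem prod_X_pow_eq_monomial_equivFunOnFinite (e : σ → ℕ) :
    ∏ i, (X i : MvPolynomial σ R) ^ e i = monomial (Finsupp.equivFunOnFinite.symm e) 1 := by
  rw [← prod_X_pow_eq_monomial, ← Finsupp.prod]
  exact (Finsupp.prod_fintype (Finsupp.equivFunOnFinite.symm e) _ fun _ => pow_zero _).symm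

variable [DecidableEq σ]

theorem sum_X_pow_pow (d m : ℕ) :
    (∑ i, (X i : MvPolynomial σ R) ^ d) ^ m =
      ∑ c ∈ univ.piAntidiag m,
        monomial (Finsupp.equivFunOnFinite.symm (d • c)) (Nat.multinomial univ c : R) := by
  rw [sum_pow_eq_sum_piAntidiag]
  refine sum_congr rfl fun c _ => ?_
  have hpow : ∀ i, ((X i : MvPolynomial σ R) ^ d) ^ c i = X i ^ (d • c) i := fun i => by
    rw [← pow_mul]; rfl
  simp_rw [hpow]
  rw [prod_X_pow_eq_monomial_equivFunOnFinite, ← C_eq_coe_nat, C_mul_monomial, mul_one]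

theorem support_sum_X_pow_pow_subset (d m : ℕ) :
    ((∑ i, (X i : MvPolynomial σ R) ^ d) ^ m).support ⊆
      (univ.piAntidiag m).image fun c => Finsupp.equivFunOnFinite.symm (d • c) := by
  rw [sum_X_pow_pow]
  refine support_sum.trans (biUnion_subset.mpr fun c hc => ?_)
  exact support_monomial_subset.trans (singleton_subset_iff.mpr (mem_image_of_mem _ hc))

theorem coeff_sum_X_pow_pow {d m : ℕ} (hd : d ≠ 0) {c : σ → ℕ} (hc : c ∈ univ.piAntidiag m) :
    coeff (Finsupp.equivFunOnFinite.symm (d • c)) ((∑ i, (X i : MvPolynomial σ R) ^ d) ^ m) =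
      Nat.multinomial univ c := by
  rw [sum_X_pow_pow, coeff_sum, sum_eq_single_of_mem c hc (fun c' _ hne => ?_), coeff_monomial,
    if_pos rfl]
  rw [coeff_monomial, if_neg]
  intro h
  exact hne (smul_right_injective _ hd (Finsupp.equivFunOnFinite.symm.injective h))

end MvPolynomial

theorem fermat_fpure_iff_composition (k : Type*) [Field k] (p : ℕ) [CharP k p]
    (hp : 0 < p) (n d : ℕ) (hd : 1 ≤ d) :
    ((∑ i : Fin n, (X i : MvPolynomial (Fin n) k) ^ d) ^ (p - 1) ∉
        Ideal.span (Set.range fun i : Fin n => (X i : MvPolynomial (Fin n) k) ^ p)) ↔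
      ∃ i : Fin n → ℕ, ∑ j, i j = p - 1 ∧ ∀ j, d * i j ≤ p - 1 := by
  have hprime : p.Prime := (CharP.char_is_prime_or_zero k p).resolve_right hp.ne'
  rw [mem_ideal_span_range_X_pow_iff]
  push Not
  constructor
  · rintro ⟨m, hm, hsmall⟩
    obtain ⟨c, hc, rfl⟩ := mem_image.mp (support_sum_X_pow_pow_subset d (p - 1) hm)
    refine ⟨c, (mem_piAntidiag.mp hc).1, fun j => ?_⟩
    have := hsmall j
    simp only [Finsupp.coe_equivFunOnFinite_symm, Pi.smul_apply, smul_eq_mul] at this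
    omega
  · rintro ⟨c, hc, hcd⟩
    have hc' : c ∈ univ.piAntidiag (p - 1) := mem_piAntidiag.mpr ⟨hc, by simp⟩
    refine ⟨Finsupp.equivFunOnFinite.symm (d • c), ?_, fun j => ?_⟩
    · rw [mem_support_iff, coeff_sum_X_pow_pow (by omega) hc']
      exact Nat.cast_multinomial_ne_zero hprime (by omega)
    · simp only [Finsupp.coe_equivFunOnFinite_symm, Pi.smul_apply, smul_eq_mul]
      have := hcd j
      omega
end

section
/- Let k be a field of characteristic p > 2 with p ≡ 2 (mod n), n ≥ 3, and let a = (p-2)/n. Let f = x_1^{n-1} + ... + x_n^{n-1} in k[x_1,...,x_n]. Then for all sufficiently large e, f^{p^e - 2p^{e-1} + 1} ∉ (x_1^{p^e}, ..., x_n^{p^e}). -/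
/-!
Put `q = p ^ (e - 1)`, `d = n - 1` and `p = n * a + 2`, so that `p ^ e - 2 * p ^ (e - 1) + 1 =
(p - 2) * q + 1`; for `e ≥ n` we have `d < q`. By Frobenius, `f ^ q = ∑ X i ^ (d * q)`, hence
`f ^ ((p - 2) * q + 1) = expand (d * q) ((∑ X i) ^ (p - 2)) * f`. As `d < d * q`, exponents are
read off in base `d * q`, so the coefficient of `X ^ (d * q • (a, …, a) + d • e₀)` in this
product is the multinomial coefficient `(p - 2)! / (a !) ^ n`, a unit mod `p`. Every exponent of
that monomial is at most `(p - 2 - a) * q + d < p ^ e`, so it survives in `k[X] / m^[p ^ e]`.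
-/

open MvPolynomial

theorem Finsupp.multinomial_natCast_ne_zero {σ R : Type*} [AddMonoidWithOne R] {p : ℕ}
    [CharP R p] (hp : p.Prime) (β : σ →₀ ℕ) (hβ : β.sum (fun _ m => m) < p) :
    (β.multinomial : R) ≠ 0 := by
  rw [Ne, CharP.cast_eq_zero_iff R p]
  intro hdvd
  have hfact : p ∣ (β.sum fun _ m => m).factorial := by
    rw [Finsupp.sum, ← Nat.multinomial_spec]
    exact dvd_mul_of_dvd_right hdvd _
  exact hβ.not_ge (hp.dvd_factorial.mp hfact)

namespace MvPolynomial

variable {σ R : Type*} [CommSemiring R]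

theorem notMem_ideal_span_X_pow_of_coeff_ne_zero {φ : MvPolynomial σ R} {α : σ →₀ ℕ} {q : ℕ}
    (hφ : coeff α φ ≠ 0) (hα : ∀ i, α i < q) :
    φ ∉ Ideal.span (Set.range fun i => (X i : MvPolynomial σ R) ^ q) := by
  have hspan : Set.range (fun i => (X i : MvPolynomial σ R) ^ q) =
      (fun s => monomial s (1 : R)) '' Set.range fun i => Finsupp.single i q := by
    simp_rw [← Set.range_comp, Function.comp_def, X_pow_eq_monomial]
  rw [hspan, mem_ideal_span_monomial_image]
  intro h
  obtain ⟨_, ⟨i, rfl⟩, hle⟩ := h α (mem_support_iff.mpr hφ)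
  exact (hα i).not_ge (Finsupp.single_le_iff.mp hle)

theorem sum_X_pow_pow_char_pow [Fintype σ] (p : ℕ) [ExpChar R p] (d m : ℕ) :
    (∑ i, X i ^ d : MvPolynomial σ R) ^ p ^ m = expand (d * p ^ m) (∑ i, X i) := by
  simp [sum_pow_char_pow, ← pow_mul, expand_X]

theorem coeff_expand_mul_sum_X_pow [Fintype σ] [DecidableEq σ] {M d : ℕ} (hd : 0 < d)
    (hdM : d < M) (φ : MvPolynomial σ R) (β : σ →₀ ℕ) (i : σ) :
    coeff (M • β + Finsupp.single i d) (expand M φ * ∑ j, X j ^ d) = coeff β φ := by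
  simp only [Finset.mul_sum, coeff_sum, X_pow_eq_monomial, coeff_mul_monomial', mul_one]
  rw [Finset.sum_eq_single i]
  · rw [if_pos le_add_self, add_tsub_cancel_right, coeff_expand_smul _ (by omega)]
  · intro j _ hji
    split_ifs with hle
    · apply coeff_expand_of_not_dvd (i := j)
      have hj := Finsupp.single_le_iff.mp hle
      simp only [Finsupp.coe_tsub, Finsupp.coe_add, Finsupp.coe_smul, Pi.sub_apply, Pi.add_apply,
        Pi.smul_apply, smul_eq_mul, Finsupp.single_eq_same, Finsupp.single_eq_of_ne hji,
        add_zero] at hj ⊢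
      intro hdvd
      have hMd : M ∣ d := (Nat.dvd_sub_iff_right hj (dvd_mul_right M _)).mp hdvd
      exact (Nat.le_of_dvd hd hMd).not_gt hdM
    · rfl
  · simp

end MvPolynomial

theorem fermat_nu_lower_bound_general (k : Type*) [Field k] (p : ℕ) [CharP k p]
    (n : ℕ) (hn : 3 ≤ n) (hmod : p % n = 2) :
    ∃ E : ℕ, ∀ e ≥ E,
      (∑ i : Fin n, (X i : MvPolynomial (Fin n) k) ^ (n - 1)) ^ (p ^ e - 2 * p ^ (e - 1) + 1) ∉
        Ideal.span (Set.range fun i : Fin n => (X i : MvPolynomial (Fin n) k) ^ (p ^ e)) := by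
  have hprime : p.Prime := CharP.char_is_prime_of_two_le k p (by have := Nat.mod_le p n; omega)
  have := Fact.mk hprime
  obtain ⟨a, ha⟩ : ∃ a, p = n * a + 2 := ⟨p / n, by have := Nat.div_add_mod p n; omega⟩
  refine ⟨n, fun e he => ?_⟩
  obtain ⟨m, rfl⟩ : ∃ m, e = m + 1 := ⟨e - 1, by omega⟩
  set q := p ^ m
  have hdq : n - 1 < q :=
    Nat.lt_pow_self hprime.one_lt |>.trans_le (Nat.pow_le_pow_right hprime.pos (by omega))
  have hexp : p ^ (m + 1) - 2 * p ^ (m + 1 - 1) + 1 = (p - 2) * q + 1 := by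
    rw [pow_succ, Nat.add_sub_cancel, Nat.sub_mul, mul_comm p]
  have hfrob : (∑ i : Fin n, (X i : MvPolynomial (Fin n) k) ^ (n - 1)) ^ ((p - 2) * q + 1) =
      expand ((n - 1) * q) ((∑ i, X i) ^ (p - 2)) * ∑ i, X i ^ (n - 1) := by
    rw [pow_succ, mul_comm (p - 2), pow_mul, sum_X_pow_pow_char_pow, map_pow]
  set β : Fin n →₀ ℕ := Finsupp.equivFunOnFinite.symm fun _ => a
  have hβ : β.sum (fun _ m => m) = p - 2 := by
    simp [Finsupp.sum_fintype, β]
    omega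
  rw [hexp, hfrob]
  refine notMem_ideal_span_X_pow_of_coeff_ne_zero
    (α := ((n - 1) * q) • β + Finsupp.single ⟨0, by omega⟩ (n - 1)) ?_ fun i => ?_
  · rw [coeff_expand_mul_sum_X_pow (by omega) (lt_mul_of_one_lt_right (by omega) (by omega)),
      coeff_sum_X_pow_of_fintype, if_pos hβ]
    exact β.multinomial_natCast_ne_zero hprime (by omega)
  · have hda : (n - 1) * a + 1 ≤ p := by
      have := Nat.mul_le_mul_right a (Nat.sub_le n 1)
      omega
    have hsingle : Finsupp.single (⟨0, by omega⟩ : Fin n) (n - 1) i ≤ n - 1 := by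
      rw [Finsupp.single_apply]
      split_ifs <;> omega
    have hβi : β i = a := rfl
    rw [Finsupp.add_apply, Finsupp.smul_apply, smul_eq_mul, hβi, pow_succ]
    change _ < q * p
    nlinarith

theorem fermat_nu_lower_bound (k : Type*) [Field k] (p : ℕ) [CharP k p]
    (hp : 2 < p) (n : ℕ) (hn : 3 ≤ n) (hmod : p % n = 2) :
    ∃ E : ℕ, ∀ e ≥ E,
      (∑ i : Fin n, (X i : MvPolynomial (Fin n) k) ^ (n - 1)) ^ (p ^ e - 2 * p ^ (e - 1) + 1) ∉
        Ideal.span (Set.range fun i : Fin n => (X i : MvPolynomial (Fin n) k) ^ (p ^ e)) :=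
  fermat_nu_lower_bound_general k p n hn hmod
end
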